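/- For all reals r ≥ 0, r' ≥ 0, θ ∈ [0, π] and s ∈ [0, r'], one has arccosh( cosh(r)·cosh(s) − sinh(r)·sinh(s)·cos(θ) ) ≤ max{ arccosh( cosh(r)·cosh(r') − sinh(r)·sinh(r')·cos(θ) ), r }. (In the hyperbolic plane: moving a point radially towards the centre along its ray does not increase its distance to a fixed point beyond the maximum of the original distance and the distance to the centre; this is the convexity of the hyperbolic metric used to contract balls in a cone.) -/

import Mathlib

/-!
For fixed `r` and `θ`, the function `s ↦ cosh r cosh s - sinh r sinh s cos θ` has the form
`a cosh s + b sinh s` with `|b| ≤ a`, i.e. it is a nonnegative combination of `exp s` and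
`exp (-s)`, hence convex. On `[0, r']` it is therefore bounded by the larger of its endpoint
values `cosh r` and `cosh r cosh r' - sinh r sinh r' cos θ`, and since `arcosh` is increasing on
`[1, ∞)` with `arcosh (cosh r) = r`, the inequality follows.
-/

/-- The inverse hyperbolic cosine, defined (for `x ≥ 1`) by
`arcosh x = log (x + sqrt (x² − 1))`. -/
noncomputable def arcosh (x : ℝ) : ℝ :=
  Real.log (x + Real.sqrt (x ^ 2 - 1))

open Set

theorem arcosh_eq_real_arcosh : arcosh = Real.arcosh := rfl

section Hyperbolic

open Real

theorem convexOn_exp_neg : ConvexOn ℝ univ fun x : ℝ => exp (-x) :=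
  convexOn_exp.comp_linearMap (-LinearMap.id)

theorem convexOn_mul_cosh_add_mul_sinh {a b : ℝ} (hab : |b| ≤ a) :
    ConvexOn ℝ univ fun x => a * cosh x + b * sinh x := by
  have hexp : (fun x => a * cosh x + b * sinh x) =
      fun x => ((a + b) / 2) • exp x + ((a - b) / 2) • exp (-x) := by
    ext x
    simp only [cosh_eq, sinh_eq, smul_eq_mul]
    ring
  rw [hexp]
  obtain ⟨hb_lower, hb_upper⟩ := abs_le.1 hab
  exact (convexOn_exp.smul (by linarith)).add (convexOn_exp_neg.smul (by linarith))

theorem abs_sinh_mul_cos_le_cosh (r θ : ℝ) : |sinh r * cos θ| ≤ cosh r :=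
  calc |sinh r * cos θ| = |sinh r| * |cos θ| := abs_mul _ _
    _ ≤ |sinh r| := mul_le_of_le_one_right (abs_nonneg _) (abs_cos_le_one θ)
    _ ≤ cosh r := by rw [abs_sinh]; exact (sinh_lt_cosh _).le.trans_eq (cosh_abs r)

theorem convexOn_cosh_mul_cosh_sub_sinh_mul_sinh_mul_cos (r θ : ℝ) :
    ConvexOn ℝ univ fun s => cosh r * cosh s - sinh r * sinh s * cos θ := by
  convert convexOn_mul_cosh_add_mul_sinh
    (abs_neg (sinh r * cos θ) ▸ abs_sinh_mul_cos_le_cosh r θ) using 2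
  ring

theorem one_le_cosh_mul_cosh_sub_sinh_mul_sinh_mul_cos {r s : ℝ} (hr : 0 ≤ r) (hs : 0 ≤ s)
    (θ : ℝ) : 1 ≤ cosh r * cosh s - sinh r * sinh s * cos θ :=
  calc 1 ≤ cosh (r - s) := one_le_cosh _
    _ = cosh r * cosh s - sinh r * sinh s := cosh_sub r s
    _ ≤ cosh r * cosh s - sinh r * sinh s * cos θ := by
      have hsinh : 0 ≤ sinh r * sinh s :=
        mul_nonneg (sinh_nonneg_iff.2 hr) (sinh_nonneg_iff.2 hs)
      exact sub_le_sub_left (mul_le_of_le_one_right hsinh (cos_le_one θ)) _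

end Hyperbolic

theorem cone_radial_convexity_general (r r' θ s : ℝ) (hr : 0 ≤ r)
    (hs : s ∈ Set.Icc (0 : ℝ) r') :
    arcosh (Real.cosh r * Real.cosh s - Real.sinh r * Real.sinh s * Real.cos θ) ≤
      max (arcosh (Real.cosh r * Real.cosh r' -
        Real.sinh r * Real.sinh r' * Real.cos θ)) r := by
  have hmax := (convexOn_cosh_mul_cosh_sub_sinh_mul_sinh_mul_cos r θ).le_max_of_mem_Icc
    (mem_univ 0) (mem_univ r') hs
  simp only [Real.cosh_zero, Real.sinh_zero, mul_one, mul_zero, zero_mul, sub_zero] at hmax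
  have hone := one_le_cosh_mul_cosh_sub_sinh_mul_sinh_mul_cos hr hs.1 θ
  rw [arcosh_eq_real_arcosh]
  rcases le_max_iff.1 hmax with h | h
  · refine le_max_of_le_right ?_
    calc Real.arcosh _ ≤ Real.arcosh (Real.cosh r) :=
          (Real.arcosh_le_arcosh (by linarith) (Real.cosh_pos r)).2 h
      _ = r := Real.arcosh_cosh hr
  · exact le_max_of_le_left ((Real.arcosh_le_arcosh (by linarith) (by linarith)).2 h)

/-- radial convexity of the hyperbolic metric: moving a point
radially towards the centre does not increase its distance to a fixed point
beyond the maximum of the original distance and the distance to the centre. -/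
theorem cone_radial_convexity (r r' θ s : ℝ) (hr : 0 ≤ r) (hr' : 0 ≤ r')
    (hθ : θ ∈ Set.Icc (0 : ℝ) Real.pi) (hs : s ∈ Set.Icc (0 : ℝ) r') :
    arcosh (Real.cosh r * Real.cosh s - Real.sinh r * Real.sinh s * Real.cos θ) ≤
      max (arcosh (Real.cosh r * Real.cosh r' -
        Real.sinh r * Real.sinh r' * Real.cos θ)) r :=
  cone_radial_convexity_general r r' θ s hr hs
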